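/- Fix N ≥ 1 and β ≥ 0. For every disorder realization (k, b) of the diluted ferromagnet on N sites and every integer m ≥ 1: (1/N²) Σ_{p,q ∈ Fin N} (ω(σ_p σ_q))^m ≥ ( (1/N²) Σ_{p,q ∈ Fin N} ω(σ_p σ_q) )^m. -/

import Mathlib

/-!
Jensen's inequality for `t ↦ t ^ m` under the uniform distribution on pairs of sites reduces
the claim to nonnegativity of the two-point functions `ω(σ_p σ_q)`, i.e. to the first Griffiths
inequality. Since `σσ' = ±1`, each bond weight is `e^{βσσ'} = cosh β + σσ' sinh β`; expanding
the product over bonds writes the Boltzmann weight as a combination of spin monomials with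
coefficients `sinh β ^ a * cosh β ^ c ≥ 0` (as `β ≥ 0`), and summing a spin monomial over all
configurations gives a product of factors `(-1) ^ e + 1 ≥ 0`.
-/

open scoped BigOperators

/-- The set of spin values `{-1, 1}` as a finite subset of `ℝ`. -/
noncomputable abbrev SpinVal : Finset ℝ := {-1, 1}

/-- Spin configurations on `n` sites: maps `Fin n → ℝ` taking values in `{-1,1}`. -/
abbrev Conf (n : ℕ) := Fin n → SpinVal

/-- Hamiltonian of the diluted ferromagnet for the disorder realization `(k, b)`:
`H(σ) = -Σ_{ν<k} σ_{(bν).1} σ_{(bν).2}`. -/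
noncomputable def Hdil {n k : ℕ} (b : Fin k → Fin n × Fin n) (σ : Conf n) : ℝ :=
  - ∑ ν : Fin k, (σ (b ν).1 : ℝ) * (σ (b ν).2 : ℝ)

/-- Partition function of the diluted ferromagnet at inverse temperature `β`. -/
noncomputable def Zdil (n : ℕ) (β : ℝ) {k : ℕ} (b : Fin k → Fin n × Fin n) : ℝ :=
  ∑ σ : Conf n, Real.exp (-β * Hdil b σ)

/-- Gibbs expectation `ω` of an observable for a fixed disorder realization. -/
noncomputable def gibbs (n : ℕ) (β : ℝ) {k : ℕ} (b : Fin k → Fin n × Fin n)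
    (f : Conf n → ℝ) : ℝ :=
  (∑ σ : Conf n, f σ * Real.exp (-β * Hdil b σ)) / Zdil n β b

/-- The Poisson probability mass function with mean `lam`. -/
noncomputable def poissonPMF (lam : ℝ) (k : ℕ) : ℝ :=
  Real.exp (-lam) * lam ^ k / (Nat.factorial k : ℝ)

/-- Quenched expectation at connectivity `α` on `n` sites: the number of bonds `k` is
Poisson(αn) and the `2k` endpoints are i.i.d. uniform on the `n` sites. -/
noncomputable def quenched (n : ℕ) (α : ℝ)
    (F : (k : ℕ) → (Fin k → Fin n × Fin n) → ℝ) : ℝ :=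
  ∑' k : ℕ, poissonPMF (α * n) k *
    ((∑ b : Fin k → Fin n × Fin n, F k b) / ((n : ℝ) ^ 2) ^ k)

/-- Boltzmann weight of the `t`-perturbed (cavity) system with realization
`(k, b, k', l)`: `exp(β Σ_ν σσ + β Σ_μ σ_{l μ})`. -/
noncomputable def cavWeight (n : ℕ) (β : ℝ) {k k' : ℕ} (b : Fin k → Fin n × Fin n)
    (l : Fin k' → Fin n) (σ : Conf n) : ℝ :=
  Real.exp (β * ∑ ν : Fin k, (σ (b ν).1 : ℝ) * (σ (b ν).2 : ℝ)
    + β * ∑ μ : Fin k', (σ (l μ) : ℝ))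

/-- Partition function of the `t`-perturbed (cavity) system. -/
noncomputable def Zcav (n : ℕ) (β : ℝ) {k k' : ℕ} (b : Fin k → Fin n × Fin n)
    (l : Fin k' → Fin n) : ℝ :=
  ∑ σ : Conf n, cavWeight n β b l σ

/-- Gibbs expectation `ω_t` of the `t`-perturbed (cavity) system at fixed realization. -/
noncomputable def gibbsCav (n : ℕ) (β : ℝ) {k k' : ℕ} (b : Fin k → Fin n × Fin n)
    (l : Fin k' → Fin n) (f : Conf n → ℝ) : ℝ :=
  (∑ σ : Conf n, f σ * cavWeight n β b l σ) / Zcav n β b l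

/-- Quenched expectation `E_t` of the `t`-perturbed system at connectivity `αt`:
`k` is Poisson(αt·n), `k'` is Poisson(2·αt·t), and all indices are i.i.d. uniform. -/
noncomputable def quenchedCav (n : ℕ) (αt t : ℝ)
    (F : (k : ℕ) → (Fin k → Fin n × Fin n) → (k' : ℕ) → (Fin k' → Fin n) → ℝ) : ℝ :=
  ∑' k : ℕ, ∑' k' : ℕ, poissonPMF (αt * n) k * poissonPMF (2 * αt * t) k' *
    ((∑ b : Fin k → Fin n × Fin n, ∑ l : Fin k' → Fin n, F k b k' l) /
      (((n : ℝ) ^ 2) ^ k * (n : ℝ) ^ k'))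

/-- The cavity function `Ψ_n(α̃, β; t) = E_t[ln Z_{n,t}] - E[ln Z_n(α̃, β)]`. -/
noncomputable def Psi (n : ℕ) (αt β t : ℝ) : ℝ :=
  quenchedCav n αt t (fun _ b _ l => Real.log (Zcav n β b l))
    - quenched n αt (fun _ b => Real.log (Zdil n β b))

open Finset

lemma pow_mean_le_mean_pow {ι : Type*} {s : Finset ι} (hs : s.Nonempty) {f : ι → ℝ}
    (hf : ∀ i ∈ s, 0 ≤ f i) (m : ℕ) :
    ((1 / (#s : ℝ)) * ∑ i ∈ s, f i) ^ m ≤ (1 / (#s : ℝ)) * ∑ i ∈ s, f i ^ m := by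
  have hweights : ∑ _i ∈ s, 1 / (#s : ℝ) = 1 := by
    rw [sum_const, nsmul_eq_mul, mul_one_div_cancel (by exact_mod_cast hs.card_ne_zero)]
  simpa only [mul_sum] using
    Real.pow_arith_mean_le_arith_mean_pow s (fun _ => 1 / (#s : ℝ)) f
      (fun _ _ => by positivity) hweights hf m

lemma SpinVal.eq_neg_one_or_one (a : SpinVal) : (a : ℝ) = -1 ∨ (a : ℝ) = 1 := by
  simpa only [mem_insert, mem_singleton] using a.2

lemma SpinVal.mul_eq_neg_one_or_one (a a' : SpinVal) :
    (a : ℝ) * a' = -1 ∨ (a : ℝ) * a' = 1 := by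
  rcases SpinVal.eq_neg_one_or_one a with h | h <;>
    rcases SpinVal.eq_neg_one_or_one a' with h' | h' <;> norm_num [h, h']

lemma sum_spinVal_pow_nonneg (e : ℕ) : 0 ≤ ∑ a : SpinVal, (a : ℝ) ^ e := by
  rw [sum_coe_sort SpinVal (· ^ e), sum_pair (by norm_num)]
  rcases Nat.even_or_odd e with h | h <;> simp [h.neg_one_pow]

section SpinSums

variable {n : ℕ}

lemma sum_conf_prod_pow_nonneg (e : Fin n → ℕ) :
    0 ≤ ∑ σ : Conf n, ∏ i, (σ i : ℝ) ^ e i := by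
  rw [← Fintype.prod_sum fun i (a : SpinVal) => (a : ℝ) ^ e i]
  exact prod_nonneg fun i _ => sum_spinVal_pow_nonneg (e i)

lemma sum_conf_multiset_prod_nonneg (L : Multiset (Fin n)) :
    0 ≤ ∑ σ : Conf n, (L.map fun i => (σ i : ℝ)).prod := by
  have hcount (σ : Conf n) :
      (L.map fun i => (σ i : ℝ)).prod = ∏ i, (σ i : ℝ) ^ L.count i := by
    rw [prod_multiset_map_count]
    exact prod_subset (subset_univ _) fun i _ hi => by
      rw [Multiset.count_eq_zero_of_notMem (by simpa using hi), pow_zero]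
  simpa only [hcount] using sum_conf_prod_pow_nonneg L.count

lemma sum_two_point_mul_bond_prod_nonneg {k : ℕ} (b : Fin k → Fin n × Fin n)
    (p q : Fin n) (t : Finset (Fin k)) :
    0 ≤ ∑ σ : Conf n, (σ p : ℝ) * σ q * ∏ ν ∈ t, (σ (b ν).1 : ℝ) * σ (b ν).2 := by
  convert sum_conf_multiset_prod_nonneg (p ::ₘ q ::ₘ t.val.bind fun ν => {(b ν).1, (b ν).2})
    using 2 with σ
  rw [prod_eq_multiset_prod, Multiset.map_cons, Multiset.map_cons, Multiset.prod_cons,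
    Multiset.prod_cons, Multiset.map_bind, Multiset.prod_bind, mul_assoc]
  simp

end SpinSums

lemma exp_mul_eq_cosh_add_mul_sinh (β : ℝ) {x : ℝ} (hx : x = -1 ∨ x = 1) :
    Real.exp (β * x) = Real.cosh β + x * Real.sinh β := by
  rcases hx with rfl | rfl
  · rw [mul_neg_one, neg_one_mul, ← sub_eq_add_neg, Real.cosh_sub_sinh]
  · rw [mul_one, one_mul, Real.cosh_add_sinh]

section Gibbs

variable {n k : ℕ} (β : ℝ) (b : Fin k → Fin n × Fin n)

lemma exp_neg_mul_Hdil_eq_sum (σ : Conf n) :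
    Real.exp (-β * Hdil b σ) = ∑ t : Finset (Fin k),
      Real.sinh β ^ #t * Real.cosh β ^ #tᶜ * ∏ ν ∈ t, (σ (b ν).1 : ℝ) * σ (b ν).2 := by
  have hbonds : -β * Hdil b σ = ∑ ν, β * ((σ (b ν).1 : ℝ) * σ (b ν).2) := by
    rw [Hdil, neg_mul_neg, mul_sum]
  rw [hbonds, Real.exp_sum]
  simp only [fun ν => exp_mul_eq_cosh_add_mul_sinh β
    (SpinVal.mul_eq_neg_one_or_one (σ (b ν).1) (σ (b ν).2)), add_comm (Real.cosh β)]
  rw [prod_add, powerset_univ]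
  refine sum_congr rfl fun t _ => ?_
  rw [← compl_eq_univ_sdiff, prod_const, prod_mul_distrib, prod_const]
  ring

lemma sum_two_point_mul_boltzmann_nonneg (hβ : 0 ≤ β) (p q : Fin n) :
    0 ≤ ∑ σ : Conf n, (σ p : ℝ) * σ q * Real.exp (-β * Hdil b σ) := by
  simp only [exp_neg_mul_Hdil_eq_sum, mul_sum]
  rw [sum_comm]
  refine sum_nonneg fun t _ => ?_
  have hcoeff : 0 ≤ Real.sinh β ^ #t * Real.cosh β ^ #tᶜ := by
    have := Real.sinh_nonneg_iff.mpr hβ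
    have := Real.cosh_pos β
    positivity
  simp_rw [mul_left_comm _ (Real.sinh β ^ #t * Real.cosh β ^ #tᶜ), ← mul_sum]
  exact mul_nonneg hcoeff (sum_two_point_mul_bond_prod_nonneg b p q t)

lemma Zdil_pos : 0 < Zdil n β b :=
  have : Nonempty (Conf n) := ⟨fun _ => ⟨1, by simp⟩⟩
  sum_pos (fun σ _ => Real.exp_pos _) univ_nonempty

lemma gibbs_two_point_nonneg (hβ : 0 ≤ β) (p q : Fin n) :
    0 ≤ gibbs n β b (fun σ => (σ p : ℝ) * σ q) :=
  div_nonneg (sum_two_point_mul_boltzmann_nonneg β b hβ p q) (Zdil_pos β b).le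

end Gibbs

theorem overlap_jensen_fixed_disorder_general (N : ℕ) (hN : 1 ≤ N) (β : ℝ) (hβ : 0 ≤ β)
    (k : ℕ) (b : Fin k → Fin N × Fin N) (m : ℕ) :
    ((1 / (N : ℝ) ^ 2) * ∑ p : Fin N, ∑ q : Fin N,
        gibbs N β b (fun σ => (σ p : ℝ) * (σ q : ℝ))) ^ m
      ≤ (1 / (N : ℝ) ^ 2) * ∑ p : Fin N, ∑ q : Fin N,
          (gibbs N β b (fun σ => (σ p : ℝ) * (σ q : ℝ))) ^ m := by
  have hpairs : ((#(univ : Finset (Fin N × Fin N)) : ℕ) : ℝ) = (N : ℝ) ^ 2 := by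
    simp [sq]
  have hne : (univ : Finset (Fin N × Fin N)).Nonempty :=
    have : Nonempty (Fin N) := ⟨⟨0, hN⟩⟩
    univ_nonempty
  have := pow_mean_le_mean_pow hne
    (f := fun x => gibbs N β b (fun σ => (σ x.1 : ℝ) * σ x.2))
    (fun x _ => gibbs_two_point_nonneg β b hβ x.1 x.2) m
  simpa only [hpairs, Fintype.sum_prod_type] using this

/-- **Fixed-disorder Jensen inequality for multi-overlaps.** For every disorder
realization `(k, b)` and every `m ≥ 1`,
`(1/N²) Σ_{p,q} (ω(σ_p σ_q))^m ≥ ((1/N²) Σ_{p,q} ω(σ_p σ_q))^m`,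
i.e. `Ω(q²_{1…m}) ≥ Ω(m²)^m` at fixed disorder. -/
theorem overlap_jensen_fixed_disorder (N : ℕ) (hN : 1 ≤ N) (β : ℝ) (hβ : 0 ≤ β)
    (k : ℕ) (b : Fin k → Fin N × Fin N) (m : ℕ) (hm : 1 ≤ m) :
    ((1 / (N : ℝ) ^ 2) * ∑ p : Fin N, ∑ q : Fin N,
        gibbs N β b (fun σ => (σ p : ℝ) * (σ q : ℝ))) ^ m
      ≤ (1 / (N : ℝ) ^ 2) * ∑ p : Fin N, ∑ q : Fin N,
          (gibbs N β b (fun σ => (σ p : ℝ) * (σ q : ℝ))) ^ m :=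
  overlap_jensen_fixed_disorder_general N hN β hβ k b m
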